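/- For any even integer a > 0 and any odd integer b > 0, the projection constant of the subspace span{1, x^a, x^{a+b}} of C[-1,1] equals 1. In particular, λ(span{1, x², x³}) = 1. -/
import Mathlib


/-- The projection constant of a subspace `U` of `C[-1,1]`. -/
noncomputable def projConst (U : Submodule ℝ C(Set.Icc (-1:ℝ) 1, ℝ)) : ℝ :=
  sInf {c : ℝ | ∃ P : C(Set.Icc (-1:ℝ) 1, ℝ) →L[ℝ] C(Set.Icc (-1:ℝ) 1, ℝ),
    (∀ w ∈ U, P w = w) ∧
    LinearMap.range (P : C(Set.Icc (-1:ℝ) 1, ℝ) →ₗ[ℝ] C(Set.Icc (-1:ℝ) 1, ℝ)) = U ∧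
    c = ‖P‖}

/-- The monomial `x ↦ x^n` as an element of `C[-1,1]`. -/
def monomialCM (n : ℕ) : C(Set.Icc (-1:ℝ) 1, ℝ) :=
  ⟨fun x => (x : ℝ) ^ n, (continuous_subtype_val.pow n)⟩

namespace ProjAux

def z0 : Set.Icc (-1:ℝ) 1 := ⟨0, by norm_num⟩
def z1 : Set.Icc (-1:ℝ) 1 := ⟨1, by norm_num⟩
def zm : Set.Icc (-1:ℝ) 1 := ⟨-1, by norm_num⟩

/-- The interpolating projection at `-1, 0, 1` onto `span {1, x^a, x^c}`. -/
noncomputable def P (a c : ℕ) : C(Set.Icc (-1:ℝ) 1, ℝ) →ₗ[ℝ] C(Set.Icc (-1:ℝ) 1, ℝ) where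
  toFun f := f z0 • monomialCM 0 + ((f z1 + f zm)/2 - f z0) • monomialCM a
    + ((f z1 - f zm)/2) • monomialCM c
  map_add' f g := by
    ext x
    simp [monomialCM]
    ring
  map_smul' r f := by
    ext x
    simp [monomialCM]
    ring

lemma P_apply (a c : ℕ) (f : C(Set.Icc (-1:ℝ) 1, ℝ)) (x : Set.Icc (-1:ℝ) 1) :
    P a c f x = f z0 * 1 + ((f z1 + f zm)/2 - f z0) * (x:ℝ)^a
      + ((f z1 - f zm)/2) * (x:ℝ)^c := by
  simp [P, monomialCM]

lemma norm_P_le (a c : ℕ) (ha : 0 < a) (hea : Even a) (hac : a ≤ c)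
    (f : C(Set.Icc (-1:ℝ) 1, ℝ)) : ‖P a c f‖ ≤ ‖f‖ := by
  refine (ContinuousMap.norm_le _ (norm_nonneg f)).mpr fun x => ?_
  rw [P_apply]
  have hx : |(x:ℝ)| ≤ 1 := abs_le.mpr ⟨x.2.1, x.2.2⟩
  have ht0 : 0 ≤ (x:ℝ)^a := hea.pow_nonneg _
  have ht1 : (x:ℝ)^a ≤ 1 := by
    rw [← hea.pow_abs]
    exact pow_le_one₀ (abs_nonneg _) hx
  have hs : |(x:ℝ)^c| ≤ (x:ℝ)^a := by
    rw [abs_pow, ← hea.pow_abs]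
    exact pow_le_pow_of_le_one (abs_nonneg _) hx hac
  obtain ⟨hs1, hs2⟩ := abs_le.mp hs
  have h0 := abs_le.mp ((f.norm_coe_le_norm z0).trans_eq' (Real.norm_eq_abs _).symm)
  have h1 := abs_le.mp ((f.norm_coe_le_norm z1).trans_eq' (Real.norm_eq_abs _).symm)
  have hm := abs_le.mp ((f.norm_coe_le_norm zm).trans_eq' (Real.norm_eq_abs _).symm)
  rw [Real.norm_eq_abs, abs_le]
  constructor <;> nlinarith [h0.1, h0.2, h1.1, h1.2, hm.1, hm.2]

lemma mono_apply (n : ℕ) (x : Set.Icc (-1:ℝ) 1) : monomialCM n x = (x:ℝ)^n := rfl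

lemma P_fix0 (a c : ℕ) : P a c (monomialCM 0) = monomialCM 0 := by
  ext x
  rw [P_apply]
  simp [mono_apply]

lemma P_fixa (a c : ℕ) (ha : 0 < a) (hea : Even a) :
    P a c (monomialCM a) = monomialCM a := by
  ext x
  rw [P_apply]
  simp [mono_apply, z0, z1, zm, zero_pow ha.ne', hea.neg_one_pow]

lemma P_fixc (a c : ℕ) (hc : 0 < c) (hoc : Odd c) :
    P a c (monomialCM c) = monomialCM c := by
  ext x
  rw [P_apply]
  simp [mono_apply, z0, z1, zm, zero_pow hc.ne', hoc.neg_one_pow]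

lemma norm_mono0 : ‖monomialCM 0‖ = 1 := by
  refine le_antisymm ((ContinuousMap.norm_le _ zero_le_one).mpr fun x => by
    simp [mono_apply]) ?_
  have := (monomialCM 0).norm_coe_le_norm z0
  simpa [mono_apply] using this

lemma main (a b : ℕ) (ha : 0 < a) (hea : Even a) (hb : 0 < b) (hob : Odd b) :
    projConst (Submodule.span ℝ {monomialCM 0, monomialCM a, monomialCM (a + b)}) = 1 := by
  set c := a + b with hc
  have hoc : Odd c := hea.add_odd hob
  have hcpos : 0 < c := lt_of_lt_of_le ha (Nat.le_add_right a b)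
  set U := Submodule.span ℝ {monomialCM 0, monomialCM a, monomialCM c} with hU
  -- the continuous projection
  set Pc : C(Set.Icc (-1:ℝ) 1, ℝ) →L[ℝ] C(Set.Icc (-1:ℝ) 1, ℝ) :=
    LinearMap.mkContinuous (P a c) 1
      (fun f => by simpa using norm_P_le a c ha hea (Nat.le_add_right a b) f) with hPc
  have hPcapp : ∀ f, Pc f = P a c f := fun f => rfl
  have hm0 : monomialCM 0 ∈ U := Submodule.subset_span (by simp)
  have hma : monomialCM a ∈ U := Submodule.subset_span (by simp)
  have hmc : monomialCM c ∈ U := Submodule.subset_span (by simp)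
  have hfix : ∀ w ∈ U, Pc w = w := by
    intro w hw
    induction hw using Submodule.span_induction with
    | mem x hx =>
      rcases hx with h | h | h
      · rw [h, hPcapp, P_fix0]
      · rw [h, hPcapp, P_fixa a c ha hea]
      · rw [h, hPcapp, P_fixc a c hcpos hoc]
    | zero => simp
    | add x y _ _ hx hy => rw [map_add, hx, hy]
    | smul r x _ hx => rw [map_smul, hx]
  have hrange : LinearMap.range (Pc : C(Set.Icc (-1:ℝ) 1, ℝ) →ₗ[ℝ] C(Set.Icc (-1:ℝ) 1, ℝ)) = U := by
    apply le_antisymm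
    · rintro _ ⟨f, rfl⟩
      show Pc f ∈ U
      rw [hPcapp]
      show f z0 • monomialCM 0 + ((f z1 + f zm)/2 - f z0) • monomialCM a
        + ((f z1 - f zm)/2) • monomialCM c ∈ U
      exact add_mem (add_mem (U.smul_mem _ hm0) (U.smul_mem _ hma)) (U.smul_mem _ hmc)
    · intro w hw
      exact ⟨w, hfix w hw⟩
  have hnorm : ‖Pc‖ = 1 := by
    refine le_antisymm (Pc.opNorm_le_bound zero_le_one fun f => by
      rw [one_mul]; exact norm_P_le a c ha hea (Nat.le_add_right a b) f) ?_
    have h := Pc.le_opNorm (monomialCM 0)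
    rw [hfix _ hm0, norm_mono0, mul_one] at h
    exact h
  have h1mem : (1:ℝ) ∈ {c : ℝ | ∃ P : C(Set.Icc (-1:ℝ) 1, ℝ) →L[ℝ] C(Set.Icc (-1:ℝ) 1, ℝ),
      (∀ w ∈ U, P w = w) ∧
      LinearMap.range (P : C(Set.Icc (-1:ℝ) 1, ℝ) →ₗ[ℝ] C(Set.Icc (-1:ℝ) 1, ℝ)) = U ∧
      (1:ℝ) = ‖P‖} := ⟨Pc, hfix, hrange, hnorm.symm⟩
  refine le_antisymm (csInf_le ⟨0, ?_⟩ h1mem) (le_csInf ⟨1, h1mem⟩ ?_)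
  · rintro x ⟨Q, _, _, rfl⟩
    exact norm_nonneg Q
  · rintro x ⟨Q, hQ, _, rfl⟩
    have h := Q.le_opNorm (monomialCM 0)
    rw [hQ _ hm0, norm_mono0, mul_one] at h
    exact h

end ProjAux

theorem projConst_span_monomials_eq_one :
    (∀ a b : ℕ, 0 < a → Even a → 0 < b → Odd b →
      projConst (Submodule.span ℝ {monomialCM 0, monomialCM a, monomialCM (a + b)}) = 1) ∧
    projConst (Submodule.span ℝ {monomialCM 0, monomialCM 2, monomialCM 3}) = 1 := by
  refine ⟨ProjAux.main, ?_⟩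
  have := ProjAux.main 2 1 two_pos (by decide) one_pos odd_one
  simpa using this
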